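/- Set H_1 = (1,1), H_2 = (−1,−1), H_3 = (e^{iπ/4}, −e^{iπ/4}) in ℂ². Then for all (z,w) ∈ ℂ²: VDM(H_1,(z,w)) = w − 1 and VDM(H_1,H_2,(z,w)) = 2(w − z); consequently |VDM(H_1,H_2)| = sup_{(z,w)∈D̄²} |VDM(H_1,(z,w))| and |VDM(H_1,H_2,H_3)| = sup_{(z,w)∈D̄²} |VDM(H_1,H_2,(z,w))|, so (H_1,H_2,H_3) is a 3-Leja section for the closed unit bidisc D̄². -/

import Mathlib

open Finset

/-- Graded lexicographic strict order on `ℕ²`. -/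
def GradedLexLt2 (k l : ℕ × ℕ) : Prop :=
  k.1 + k.2 < l.1 + l.2 ∨
    (k.1 + k.2 = l.1 + l.2 ∧ (k.1 < l.1 ∨ (k.1 = l.1 ∧ k.2 < l.2)))

/-- Generalized bidimensional Vandermonde determinant `det [e_i(G_j)]`. -/
noncomputable def VDM2 (kEnum : ℕ → ℕ × ℕ) {N : ℕ} (G : Fin N → ℂ × ℂ) : ℂ :=
  Matrix.det (Matrix.of fun i j : Fin N =>
    (G j).1 ^ (kEnum (i : ℕ)).1 * (G j).2 ^ (kEnum (i : ℕ)).2)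

/-- The closed unit bidisc. -/
def Bidisc : Set (ℂ × ℂ) := {p | norm p.1 ≤ 1 ∧ norm p.2 ≤ 1}

/-- An `M`-Leja section (given by the first `M` terms of `G`) for a compact set
`K ⊂ ℂ²`; `G n` is the paper's `H_{n+1}`. -/
def IsLejaSection2 (kEnum : ℕ → ℕ × ℕ) (K : Set (ℂ × ℂ)) (M : ℕ) (G : ℕ → ℂ × ℂ) :
    Prop :=
  (∀ n < M, G n ∈ K) ∧ G 0 ∈ frontier K ∧
    ∀ n : ℕ, 1 ≤ n → n < M →
      IsGreatest
        ((fun z => norm (VDM2 kEnum (Fin.snoc (fun i : Fin n => G i) z))) '' K)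
        (norm (VDM2 kEnum (Fin.snoc (fun i : Fin n => G i) (G n))))

/-!
A monotone enumeration of the monomials must start `1, w, z`, so `VDM(H₁, (z, w))` and
`VDM(H₁, H₂, (z, w))` are the explicit affine functions `w - 1` and `2 (w - z)`. On the bidisc
the triangle inequality bounds them by `2` and `4`, and these bounds are attained at `H₂ = (-1, -1)`
and at `H₃ = (ω, -ω)` with `|ω| = 1`. Finally `H₁ = (1, 1)` lies on the boundary because the
bidisc is the closed unit ball of the sup norm on `ℂ²`.
-/

theorem gradedLexLt2_irrefl (k : ℕ × ℕ) : ¬ GradedLexLt2 k k := by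
  unfold GradedLexLt2
  omega

/-- Surjectivity and monotonicity force `kEnum a` to be the least monomial not yet enumerated. -/
theorem kEnum_eq_of_forall_lt {kEnum : ℕ → ℕ × ℕ} (hsurj : Function.Surjective kEnum)
    (hmono : ∀ a b : ℕ, a < b → GradedLexLt2 (kEnum a) (kEnum b)) {a : ℕ} {q : ℕ × ℕ}
    (hnew : ∀ b < a, kEnum b ≠ q) (hlt : ∀ p, GradedLexLt2 p q → ∃ b < a, kEnum b = p) :
    kEnum a = q := by
  obtain ⟨c, rfl⟩ := hsurj q
  rcases lt_trichotomy a c with hac | rfl | hca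
  · obtain ⟨b, hba, hb⟩ := hlt _ (hmono a c hac)
    exact absurd (hb ▸ hmono b a hba) (gradedLexLt2_irrefl _)
  · rfl
  · exact absurd rfl (hnew c hca)

section FirstMonomials

variable {kEnum : ℕ → ℕ × ℕ}

theorem kEnum_zero (hsurj : Function.Surjective kEnum)
    (hmono : ∀ a b : ℕ, a < b → GradedLexLt2 (kEnum a) (kEnum b)) : kEnum 0 = (0, 0) :=
  kEnum_eq_of_forall_lt hsurj hmono (by omega) fun p hp => by unfold GradedLexLt2 at hp; omega

theorem kEnum_one (hsurj : Function.Surjective kEnum)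
    (hmono : ∀ a b : ℕ, a < b → GradedLexLt2 (kEnum a) (kEnum b)) : kEnum 1 = (0, 1) := by
  refine kEnum_eq_of_forall_lt hsurj hmono ?_ fun p hp => ⟨0, one_pos, ?_⟩
  · intro b hb
    rw [Nat.lt_one_iff.mp hb, kEnum_zero hsurj hmono]
    decide
  · rw [kEnum_zero hsurj hmono]
    unfold GradedLexLt2 at hp
    ext <;> simp only <;> omega

theorem kEnum_two (hsurj : Function.Surjective kEnum)
    (hmono : ∀ a b : ℕ, a < b → GradedLexLt2 (kEnum a) (kEnum b)) : kEnum 2 = (1, 0) := by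
  refine kEnum_eq_of_forall_lt hsurj hmono ?_ fun p hp => ?_
  · intro b hb
    interval_cases b
    · rw [kEnum_zero hsurj hmono]; decide
    · rw [kEnum_one hsurj hmono]; decide
  · unfold GradedLexLt2 at hp
    obtain ⟨p₁, p₂⟩ := p
    rcases (by simp only at hp; omega : p₁ = 0 ∧ p₂ = 0 ∨ p₁ = 0 ∧ p₂ = 1) with
      ⟨rfl, rfl⟩ | ⟨rfl, rfl⟩
    · exact ⟨0, two_pos, kEnum_zero hsurj hmono⟩
    · exact ⟨1, one_lt_two, kEnum_one hsurj hmono⟩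

end FirstMonomials

section ExplicitVandermonde

variable {kEnum : ℕ → ℕ × ℕ}

theorem VDM2_fin_two (h0 : kEnum 0 = (0, 0)) (h1 : kEnum 1 = (0, 1)) (p q : ℂ × ℂ) :
    VDM2 kEnum ![p, q] = q.2 - p.2 := by
  simp [VDM2, Matrix.det_fin_two, h0, h1]

theorem VDM2_fin_three (h0 : kEnum 0 = (0, 0)) (h1 : kEnum 1 = (0, 1)) (h2 : kEnum 2 = (1, 0))
    (p q r : ℂ × ℂ) :
    VDM2 kEnum ![p, q, r] = (q.2 - p.2) * (r.1 - p.1) - (r.2 - p.2) * (q.1 - p.1) := by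
  simp [VDM2, Matrix.det_fin_three, h0, h1, h2]
  ring

theorem VDM2_one_one_neg_one (h0 : kEnum 0 = (0, 0)) (h1 : kEnum 1 = (0, 1))
    (h2 : kEnum 2 = (1, 0)) (z w : ℂ) :
    VDM2 kEnum ![((1 : ℂ), (1 : ℂ)), ((-1 : ℂ), (-1 : ℂ)), (z, w)] = 2 * (w - z) := by
  rw [VDM2_fin_three h0 h1 h2]
  ring

end ExplicitVandermonde

theorem bidisc_eq_closedBall : Bidisc = Metric.closedBall 0 1 := by
  ext p
  simp [Bidisc, Prod.norm_def]

theorem frontier_bidisc : frontier Bidisc = Metric.sphere 0 1 := by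
  rw [bidisc_eq_closedBall, frontier_closedBall _ one_ne_zero]

theorem norm_sub_le_two_of_mem_bidisc {p : ℂ × ℂ} (hp : p ∈ Bidisc) {a : ℂ} (ha : ‖a‖ ≤ 1) :
    ‖p.2 - a‖ ≤ 2 := by
  calc ‖p.2 - a‖ ≤ ‖p.2‖ + ‖a‖ := norm_sub_le _ _
    _ ≤ 1 + 1 := add_le_add hp.2 ha
    _ = 2 := one_add_one_eq_two

section LejaMaxima

variable {kEnum : ℕ → ℕ × ℕ}

theorem isGreatest_norm_VDM2_one_one (h0 : kEnum 0 = (0, 0)) (h1 : kEnum 1 = (0, 1)) :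
    IsGreatest ((fun p : ℂ × ℂ => ‖VDM2 kEnum ![((1 : ℂ), (1 : ℂ)), p]‖) '' Bidisc)
      ‖VDM2 kEnum ![((1 : ℂ), (1 : ℂ)), ((-1 : ℂ), (-1 : ℂ))]‖ := by
  refine ⟨⟨_, ⟨by simp, by simp⟩, rfl⟩, ?_⟩
  rintro _ ⟨p, hp, rfl⟩
  simp only [VDM2_fin_two h0 h1]
  norm_num
  exact norm_sub_le_two_of_mem_bidisc hp norm_one.le

theorem isGreatest_norm_VDM2_one_one_neg_one (h0 : kEnum 0 = (0, 0)) (h1 : kEnum 1 = (0, 1))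
    (h2 : kEnum 2 = (1, 0)) {ω : ℂ} (hω : ‖ω‖ = 1) :
    IsGreatest
      ((fun p : ℂ × ℂ => ‖VDM2 kEnum ![((1 : ℂ), (1 : ℂ)), ((-1 : ℂ), (-1 : ℂ)), p]‖) '' Bidisc)
      ‖VDM2 kEnum ![((1 : ℂ), (1 : ℂ)), ((-1 : ℂ), (-1 : ℂ)), (ω, -ω)]‖ := by
  refine ⟨⟨_, ⟨hω.le, by simp [hω]⟩, rfl⟩, ?_⟩
  rintro _ ⟨⟨z, w⟩, hp, rfl⟩
  simp only [VDM2_one_one_neg_one h0 h1 h2, norm_mul, ← neg_add', norm_neg, ← two_mul, hω]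
  norm_num
  linarith [norm_sub_le_two_of_mem_bidisc hp hp.1]

end LejaMaxima

theorem norm_exp_pi_mul_I_div_four : ‖Complex.exp ((Real.pi : ℂ) * Complex.I / 4)‖ = 1 := by
  simp [Complex.norm_exp]

theorem snoc_fin_one (G : ℕ → ℂ × ℂ) (p : ℂ × ℂ) :
    (Fin.snoc (fun i : Fin 1 => G i) p : Fin 2 → ℂ × ℂ) = ![G 0, p] := by
  ext i : 1; fin_cases i <;> rfl

theorem snoc_fin_two (G : ℕ → ℂ × ℂ) (p : ℂ × ℂ) :
    (Fin.snoc (fun i : Fin 2 => G i) p : Fin 3 → ℂ × ℂ) = ![G 0, G 1, p] := by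
  ext i : 1; fin_cases i <;> rfl

/-- with `H_1 = (1,1)`, `H_2 = (−1,−1)`, `H_3 = (e^{iπ/4}, −e^{iπ/4})`,
one has `VDM(H_1,(z,w)) = w − 1` and `VDM(H_1,H_2,(z,w)) = 2(w − z)`; consequently the
maxima over the bidisc are attained at `H_2` and `H_3` respectively, so
`(H_1,H_2,H_3)` is a 3-Leja section for the closed unit bidisc. -/
theorem statement8
    (kEnum : ℕ → ℕ × ℕ) (hbij : Function.Bijective kEnum)
    (hmono : ∀ a b : ℕ, a < b → GradedLexLt2 (kEnum a) (kEnum b))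
    (G : ℕ → ℂ × ℂ) (hG0 : G 0 = (1, 1)) (hG1 : G 1 = (-1, -1))
    (hG2 : G 2 = (Complex.exp ((Real.pi : ℂ) * Complex.I / 4),
                  -Complex.exp ((Real.pi : ℂ) * Complex.I / 4))) :
    (∀ z w : ℂ, VDM2 kEnum ![((1 : ℂ), (1 : ℂ)), (z, w)] = w - 1) ∧
    (∀ z w : ℂ,
      VDM2 kEnum ![((1 : ℂ), (1 : ℂ)), ((-1 : ℂ), (-1 : ℂ)), (z, w)] = 2 * (w - z)) ∧
    IsGreatest
      ((fun p : ℂ × ℂ => norm (VDM2 kEnum ![((1 : ℂ), (1 : ℂ)), p])) '' Bidisc)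
      (norm (VDM2 kEnum ![((1 : ℂ), (1 : ℂ)), ((-1 : ℂ), (-1 : ℂ))])) ∧
    IsGreatest
      ((fun p : ℂ × ℂ =>
          norm (VDM2 kEnum ![((1 : ℂ), (1 : ℂ)), ((-1 : ℂ), (-1 : ℂ)), p])) ''
        Bidisc)
      (norm (VDM2 kEnum
        ![((1 : ℂ), (1 : ℂ)), ((-1 : ℂ), (-1 : ℂ)),
          (Complex.exp ((Real.pi : ℂ) * Complex.I / 4),
           -Complex.exp ((Real.pi : ℂ) * Complex.I / 4))])) ∧
    IsLejaSection2 kEnum Bidisc 3 G := by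
  have h0 := kEnum_zero hbij.2 hmono
  have h1 := kEnum_one hbij.2 hmono
  have h2 := kEnum_two hbij.2 hmono
  have hω := norm_exp_pi_mul_I_div_four
  have hmax₂ := isGreatest_norm_VDM2_one_one h0 h1
  have hmax₃ := isGreatest_norm_VDM2_one_one_neg_one h0 h1 h2 hω
  refine ⟨fun z w => VDM2_fin_two h0 h1 _ _, VDM2_one_one_neg_one h0 h1 h2, hmax₂, hmax₃,
    fun n hn => ?_, ?_, fun n _ hn => ?_⟩
  · interval_cases n <;> simp [hG0, hG1, hG2, Bidisc, hω]
  · rw [hG0, frontier_bidisc]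
    simp [Prod.norm_def]
  · interval_cases n
    · simpa only [snoc_fin_one, hG0, hG1] using hmax₂
    · simpa only [snoc_fin_two, hG0, hG1, hG2] using hmax₃
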